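/- arXiv:1108.1847 — 3 statements merged into one kernel-verified Lean document; each statement's English description precedes it below -/
import Mathlib

section
/- Let S, B, A be polynomials in the variables t = (t_1, ..., t_m) and x, with rational coefficients, and let d = deg_x S ≥ 1. Assume S and B are coprime as polynomials in x over the field ℚ(t_1, ..., t_m). Then there exist a nonzero polynomial Q ∈ ℤ[t_1, ..., t_m] and a polynomial U ∈ ℤ[t_1, ..., t_m, x] with deg_x U ≤ d − 1, and a nonzero integer c, such that for every point (τ, ξ) ∈ ℂ^m × ℂ satisfying S(τ, ξ) = 0, B(τ, ξ) ≠ 0 and Q(τ) ≠ 0, one has c · A(τ, ξ) / B(τ, ξ) = U(τ, ξ) / Q(τ). -/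
/-- Evaluation of a polynomial in `x` with coefficients in `ℚ[t_1, …, t_m]` at a point
`(τ, ξ) ∈ ℂ^m × ℂ`. -/
noncomputable def evalRat {m : ℕ} (τ : Fin m → ℂ) (ξ : ℂ)
    (p : Polynomial (MvPolynomial (Fin m) ℚ)) : ℂ :=
  Polynomial.eval₂ (MvPolynomial.aeval τ : MvPolynomial (Fin m) ℚ →ₐ[ℚ] ℂ).toRingHom ξ p

/-- Evaluation of a polynomial in `x` with coefficients in `ℤ[t_1, …, t_m]` at a point
`(τ, ξ) ∈ ℂ^m × ℂ`. -/
noncomputable def evalInt {m : ℕ} (τ : Fin m → ℂ) (ξ : ℂ)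
    (p : Polynomial (MvPolynomial (Fin m) ℤ)) : ℂ :=
  Polynomial.eval₂ (MvPolynomial.aeval τ : MvPolynomial (Fin m) ℤ →ₐ[ℤ] ℂ).toRingHom ξ p

/-! Over the fraction field of `ℚ[t]`, a Bézout relation `u S + v B = 1` makes `U = v A mod S`
a polynomial of `x`-degree `< deg S` with `U B ≡ A (mod S)`. Clearing denominators, first those
in `ℚ[t]` and then the rational ones, turns this into `U B + S W = a A` with `a ≠ 0`, so that on
`{S = 0}` the quotient `A / B` is `U / a`. -/

open Polynomial

theorem Polynomial.natDegree_le_natDegree_sub_one_of_degree_lt {R : Type*} [Semiring R]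
    {p q : R[X]} (h : p.degree < q.degree) : p.natDegree ≤ q.natDegree - 1 := by
  rcases eq_or_ne p 0 with rfl | hp
  · simp
  · have := natDegree_lt_natDegree hp h
    omega

theorem Polynomial.exists_mul_add_mul_eq_of_isCoprime {K : Type*} [Field K] {S B : K[X]}
    (hS : S ≠ 0) (h : IsCoprime S B) (A : K[X]) :
    ∃ U W : K[X], U.degree < S.degree ∧ U * B + S * W = A := by
  obtain ⟨u, v, huv⟩ := h
  refine ⟨v * A % S, u * A + v * A / S * B, degree_mod_lt _ hS, ?_⟩
  linear_combination B * EuclideanDomain.mod_eq_sub_mul_div (v * A) S + A * huv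

theorem Polynomial.exists_mul_add_mul_eq_C_mul_of_isCoprime_map {R K : Type*} [CommRing R]
    [IsDomain R] [Field K] [Algebra R K] [IsFractionRing R K] {S B : R[X]} (hS : S ≠ 0)
    (h : IsCoprime (S.map (algebraMap R K)) (B.map (algebraMap R K))) (A : R[X]) :
    ∃ a : R, a ≠ 0 ∧ ∃ U W : R[X], U.degree < S.degree ∧ U * B + S * W = C a * A := by
  have hinj := IsFractionRing.injective R K
  obtain ⟨U, W, hdeg, hUW⟩ := exists_mul_add_mul_eq_of_isCoprime
    ((Polynomial.map_ne_zero_iff hinj).mpr hS) h (A.map (algebraMap R K))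
  obtain ⟨b, hb, hU⟩ := IsLocalization.integerNormalization_spec (nonZeroDivisors R) U
  obtain ⟨c, hc, hW⟩ := IsLocalization.integerNormalization_spec (nonZeroDivisors R) W
  set U' := IsLocalization.integerNormalization (nonZeroDivisors R) U
  set W' := IsLocalization.integerNormalization (nonZeroDivisors R) W
  refine ⟨b * c, mul_ne_zero (nonZeroDivisors.ne_zero hb) (nonZeroDivisors.ne_zero hc),
    c • U', b • W', ?_, ?_⟩
  · calc (c • U').degree ≤ U'.degree := degree_smul_le _ _
      _ = (b • U).degree := by rw [← hU, degree_map_eq_of_injective hinj]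
      _ ≤ U.degree := degree_smul_le _ _
      _ < (S.map (algebraMap R K)).degree := hdeg
      _ = S.degree := degree_map_eq_of_injective hinj _
  · apply map_injective _ hinj
    simp only [Polynomial.map_add, Polynomial.map_mul, map_C, hU, hW,
      Algebra.smul_def, map_mul, Polynomial.algebraMap_apply]
    linear_combination C (algebraMap R K b) * C (algebraMap R K c) * hUW

section ClearDenominators

variable {σ R S : Type*} [CommRing R] [CommRing S] [Algebra R S] (M : Submonoid R)
  [IsLocalization M S]

attribute [local instance] MvPolynomial.algebraMvPolynomial

theorem MvPolynomial.exists_map_algebraMap_eq_smul (p : MvPolynomial σ S) :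
    ∃ b ∈ M, ∃ q : MvPolynomial σ R, q.map (algebraMap R S) = b • p := by
  obtain ⟨⟨q, ⟨_, ⟨b, hb, rfl⟩⟩⟩, h⟩ := IsLocalization.surj (M.map (C (σ := σ))) p
  refine ⟨b, hb, q, ?_⟩
  simp only at h
  rw [← algebraMap_def, ← h, algebraMap_def, map_C, Algebra.smul_def,
    MvPolynomial.algebraMap_apply, mul_comm]

theorem Polynomial.exists_map_map_algebraMap_eq_smul (p : (MvPolynomial σ S)[X]) :
    ∃ b ∈ M, ∃ q : (MvPolynomial σ R)[X], q.map (MvPolynomial.map (algebraMap R S)) = b • p := by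
  obtain ⟨_, ⟨b, hb, rfl⟩, h⟩ :=
    IsLocalization.integerNormalization_spec (M.map (MvPolynomial.C (σ := σ))) p
  refine ⟨b, hb, _, h.trans ?_⟩
  simp [Algebra.smul_def]

end ClearDenominators

theorem evalRat_div_eq_of_mul_add_mul_eq_C_mul {m : ℕ} {τ : Fin m → ℂ} {ξ : ℂ}
    {S B A U W : (MvPolynomial (Fin m) ℚ)[X]} {a : MvPolynomial (Fin m) ℚ}
    (h : U * B + S * W = C a * A) (hS : evalRat τ ξ S = 0) (hB : evalRat τ ξ B ≠ 0)
    (ha : MvPolynomial.aeval τ a ≠ 0) :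
    evalRat τ ξ A / evalRat τ ξ B = evalRat τ ξ U / MvPolynomial.aeval τ a := by
  have h' := congrArg (eval₂RingHom (MvPolynomial.aeval τ).toRingHom ξ) h
  simp only [map_add, map_mul, coe_eval₂RingHom, eval₂_C] at h'
  change evalRat τ ξ U * evalRat τ ξ B + evalRat τ ξ S * evalRat τ ξ W =
    MvPolynomial.aeval τ a * evalRat τ ξ A at h'
  rw [div_eq_div_iff hB ha]
  linear_combination (-1 : ℂ) * h' + evalRat τ ξ W * hS

theorem evalInt_eq_evalRat_map {m : ℕ} (τ : Fin m → ℂ) (ξ : ℂ)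
    (q : (MvPolynomial (Fin m) ℤ)[X]) :
    evalInt τ ξ q = evalRat τ ξ (q.map (MvPolynomial.map (algebraMap ℤ ℚ))) := by
  simp only [evalInt, evalRat, eval₂_map]
  congr 1
  exact MvPolynomial.ringHom_ext (fun _ ↦ by simp) (fun _ ↦ by simp)

theorem evalRat_zsmul {m : ℕ} (τ : Fin m → ℂ) (ξ : ℂ) (n : ℤ)
    (p : (MvPolynomial (Fin m) ℚ)[X]) : evalRat τ ξ (n • p) = n * evalRat τ ξ p := by
  change eval₂RingHom _ ξ (n • p) = _
  rw [map_zsmul, zsmul_eq_mul]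
  rfl

theorem evalInt_zsmul {m : ℕ} (τ : Fin m → ℂ) (ξ : ℂ) (n : ℤ)
    (p : (MvPolynomial (Fin m) ℤ)[X]) : evalInt τ ξ (n • p) = n * evalInt τ ξ p := by
  change eval₂RingHom _ ξ (n • p) = _
  rw [map_zsmul, zsmul_eq_mul]
  rfl

/-- elimination lemma: if `S, B` are coprime as polynomials in `x` over
`ℚ(t_1, …, t_m)` and `d = deg_x S ≥ 1`, then there are `Q ∈ ℤ[t]`, `U ∈ ℤ[t, x]` with
`deg_x U ≤ d - 1`, and `0 ≠ c ∈ ℤ` such that `c·A/B = U/Q` at every point of the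
hypersurface `{S = 0}` where `B` and `Q` do not vanish. -/
theorem stmt0 (m : ℕ) (S B A : Polynomial (MvPolynomial (Fin m) ℚ))
    (d : ℕ) (hd : d = S.natDegree) (hd1 : 1 ≤ d)
    (hcop : IsCoprime
      (S.map (algebraMap (MvPolynomial (Fin m) ℚ) (FractionRing (MvPolynomial (Fin m) ℚ))))
      (B.map (algebraMap (MvPolynomial (Fin m) ℚ) (FractionRing (MvPolynomial (Fin m) ℚ))))) :
    ∃ Q : MvPolynomial (Fin m) ℤ, Q ≠ 0 ∧
    ∃ U : Polynomial (MvPolynomial (Fin m) ℤ), U.natDegree ≤ d - 1 ∧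
    ∃ c : ℤ, c ≠ 0 ∧
      ∀ (τ : Fin m → ℂ) (ξ : ℂ),
        evalRat τ ξ S = 0 → evalRat τ ξ B ≠ 0 → MvPolynomial.aeval τ Q ≠ 0 →
          (c : ℂ) * evalRat τ ξ A / evalRat τ ξ B
            = evalInt τ ξ U / MvPolynomial.aeval τ Q := by
  have hS : S ≠ 0 := by rintro rfl; simp at hd; omega
  obtain ⟨a, ha, U, W, hU, hUW⟩ := exists_mul_add_mul_eq_C_mul_of_isCoprime_map hS hcop A
  obtain ⟨n₁, hn₁, Qz, hQz⟩ := MvPolynomial.exists_map_algebraMap_eq_smul (nonZeroDivisors ℤ) a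
  obtain ⟨n₂, hn₂, Uz, hUz⟩ :=
    Polynomial.exists_map_map_algebraMap_eq_smul (nonZeroDivisors ℤ) U
  rw [mem_nonZeroDivisors_iff_ne_zero] at hn₁ hn₂
  -- `Qz = n₁ a` and `n₁ • Uz = n₁ n₂ U`, so the factor `c = n₂` balances the two sides.
  refine ⟨Qz, ?_, n₁ • Uz, ?_, n₂, hn₂, fun τ ξ hSξ hBξ hQξ ↦ ?_⟩
  · rintro rfl
    exact smul_ne_zero hn₁ ha (by simpa using hQz.symm)
  · calc (n₁ • Uz).natDegree ≤ Uz.natDegree := natDegree_smul_le _ _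
      _ = (n₂ • U).natDegree := by
        rw [← hUz, natDegree_map_eq_of_injective
          (MvPolynomial.map_injective _ (algebraMap ℤ ℚ).injective_int)]
      _ ≤ U.natDegree := natDegree_smul_le _ _
      _ ≤ d - 1 := hd ▸ natDegree_le_natDegree_sub_one_of_degree_lt hU
  · have hQa : MvPolynomial.aeval τ Qz = n₁ * MvPolynomial.aeval τ a := by
      rw [← MvPolynomial.aeval_map_algebraMap ℚ, hQz, map_zsmul, zsmul_eq_mul]
    have hUa : evalInt τ ξ (n₁ • Uz) = n₁ * (n₂ * evalRat τ ξ U) := by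
      rw [evalInt_zsmul, evalInt_eq_evalRat_map, hUz, evalRat_zsmul]
    rw [hQa] at hQξ ⊢
    rw [hUa, mul_div_assoc, evalRat_div_eq_of_mul_add_mul_eq_C_mul hUW hSξ hBξ
      (right_ne_zero_of_mul hQξ)]
    field_simp
end

section
/- Let λ_1 < λ_2 < ... < λ_n be distinct real numbers and c_1, ..., c_n real numbers, not all zero. Then the function f(t) = Σ_{j=1}^n c_j · t^{λ_j} (defined for t > 0, where t^λ = exp(λ · log t)) has at most n − 1 zeros in the open interval (0, ∞). -/
/-!
Dividing by `t ^ λ₁` does not change the zeros on `(0, ∞)` and makes the first exponent `0`;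
differentiating then kills that term and leaves a combination of `n - 1` powers with distinct
exponents `λⱼ - λ₁ - 1` and coefficients `cⱼ (λⱼ - λ₁)`. By Rolle's theorem a function has at most
one zero more than its derivative on an interval, so induction on `n` gives the bound.
-/

open Set

lemma Set.OrdConnected.encard_zeros_le_encard_zeros_deriv_add_one {s : Set ℝ}
    (hs : s.OrdConnected) {f f' : ℝ → ℝ} (hf : ∀ x ∈ s, HasDerivAt f (f' x) x) :
    {x ∈ s | f x = 0}.encard ≤ {x ∈ s | f' x = 0}.encard + 1 := by
  obtain hZ' | hZ' := {x ∈ s | f' x = 0}.finite_or_infinite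
  swap
  · simp [hZ'.encard_eq]
  have interleaved : ∀ T : Finset ℝ, ↑T ⊆ {x ∈ s | f x = 0} →
      T.card ≤ hZ'.toFinset.card + 1 := by
    intro T hT
    refine Finset.card_le_of_interleaved fun x hx y hy hxy _ => ?_
    obtain ⟨hxs, hfx⟩ := hT hx
    obtain ⟨hys, hfy⟩ := hT hy
    have hIcc : Icc x y ⊆ s := hs.out hxs hys
    obtain ⟨z, hz, hf'z⟩ := exists_hasDerivAt_eq_zero hxy
      (fun w hw => (hf w (hIcc hw)).continuousAt.continuousWithinAt) (hfx.trans hfy.symm)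
      (fun w hw => hf w (hIcc (Ioo_subset_Icc_self hw)))
    exact ⟨z, hZ'.mem_toFinset.2 ⟨hIcc (Ioo_subset_Icc_self hz), hf'z⟩, hz⟩
  rw [hZ'.encard_eq_coe_toFinset_card]
  obtain hZ | hZ := {x ∈ s | f x = 0}.finite_or_infinite
  · rw [hZ.encard_eq_coe_toFinset_card]
    exact_mod_cast interleaved _ hZ.coe_toFinset.subset
  · obtain ⟨T, hT, hTcard⟩ := hZ.exists_subset_card_eq (hZ'.toFinset.card + 2)
    have := interleaved T hT
    omega

noncomputable def rpowSum {ι : Type*} [Fintype ι] (c lam : ι → ℝ) (t : ℝ) : ℝ :=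
  ∑ j, c j * t ^ lam j

section

variable {ι : Type*} [Fintype ι] (c lam : ι → ℝ) {t : ℝ}

lemma rpow_mul_rpowSum_sub (ht : 0 < t) (a : ℝ) :
    t ^ a * rpowSum c (fun j => lam j - a) t = rpowSum c lam t := by
  simp only [rpowSum, Finset.mul_sum]
  refine Finset.sum_congr rfl fun j _ => ?_
  rw [Real.rpow_sub ht]
  field_simp

lemma rpowSum_eq_zero_iff_sub (ht : 0 < t) (a : ℝ) :
    rpowSum c (fun j => lam j - a) t = 0 ↔ rpowSum c lam t = 0 := by
  rw [← rpow_mul_rpowSum_sub c lam ht a, mul_eq_zero_iff_left (Real.rpow_pos_of_pos ht a).ne']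

lemma hasDerivAt_rpowSum (ht : 0 < t) :
    HasDerivAt (rpowSum c lam) (rpowSum (fun j => c j * lam j) (fun j => lam j - 1) t) t := by
  refine (HasDerivAt.fun_sum (u := Finset.univ) fun j _ =>
    (Real.hasDerivAt_rpow_const (p := lam j) (Or.inl ht.ne')).const_mul (c j)).congr_deriv ?_
  exact Finset.sum_congr rfl fun j _ => (mul_assoc _ _ _).symm

end

-- Stated with `+ 1` on the left to avoid truncated subtraction in `n - 1`.
lemma encard_rpowSum_zeros_add_one_le (n : ℕ) (lam : Fin n → ℝ) (hlam : Function.Injective lam)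
    (c : Fin n → ℝ) (hc : c ≠ 0) :
    {t ∈ Ioi 0 | rpowSum c lam t = 0}.encard + 1 ≤ n := by
  induction n with
  | zero => exact absurd (Subsingleton.elim c 0) hc
  | succ n ih =>
    set μ : Fin (n + 1) → ℝ := fun j => lam j - lam 0
    have hzeros : {t ∈ Ioi 0 | rpowSum c lam t = 0} = {t ∈ Ioi 0 | rpowSum c μ t = 0} :=
      sep_ext_iff.2 fun t ht => (rpowSum_eq_zero_iff_sub c lam ht _).symm
    rw [hzeros]
    have hμ : ∀ j : Fin n, μ j.succ ≠ 0 := fun j => sub_ne_zero.2 (hlam.ne (Fin.succ_ne_zero j))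
    set c' : Fin n → ℝ := fun j => c j.succ * μ j.succ
    set lam' : Fin n → ℝ := fun j => μ j.succ - 1
    by_cases hc' : c' = 0
    · have hcs : ∀ j : Fin n, c j.succ = 0 := fun j =>
        (mul_eq_zero_iff_right (hμ j)).1 (congrFun hc' j)
      have hc0 : c 0 ≠ 0 := fun h => hc (funext (Fin.cases h hcs))
      have : {t ∈ Ioi 0 | rpowSum c μ t = 0} = ∅ := by
        refine eq_empty_of_forall_notMem fun t ⟨_, ht⟩ => hc0 ?_
        simpa [rpowSum, Fin.sum_univ_succ, hcs, μ] using ht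
      rw [this, encard_empty, zero_add]
      exact_mod_cast Nat.le_add_left 1 n
    · have hderiv : ∀ t ∈ Ioi 0, HasDerivAt (rpowSum c μ) (rpowSum c' lam' t) t := by
        intro t ht
        convert hasDerivAt_rpowSum c μ ht using 1
        simp [rpowSum, Fin.sum_univ_succ, μ, c', lam']
      have hlam' : Function.Injective lam' := fun i j h =>
        Fin.succ_injective _ (hlam (by simpa [lam', μ] using h))
      calc _ + 1 ≤ {t ∈ Ioi 0 | rpowSum c' lam' t = 0}.encard + 1 + 1 := by
            gcongr
            exact ordConnected_Ioi.encard_zeros_le_encard_zeros_deriv_add_one hderiv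
        _ ≤ n + 1 := by
            gcongr
            exact ih lam' hlam' c' hc'
        _ = (n + 1 : ℕ) := by norm_cast

/-- A nontrivial real linear combination `f t = Σ c_j t^{λ_j}` of powers
with distinct real exponents `λ_1 < … < λ_n` has at most `n - 1` zeros on `(0, ∞)`. -/
theorem stmt4 (n : ℕ) (lam : Fin n → ℝ) (hlam : StrictMono lam)
    (c : Fin n → ℝ) (hc : c ≠ 0) :
    {t : ℝ | 0 < t ∧ ∑ j, c j * t ^ lam j = 0}.Finite ∧
    {t : ℝ | 0 < t ∧ ∑ j, c j * t ^ lam j = 0}.ncard ≤ n - 1 := by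
  have h := encard_rpowSum_zeros_add_one_le n lam hlam.injective c hc
  have hfin : {t ∈ Ioi 0 | rpowSum c lam t = 0}.Finite :=
    finite_of_encard_le_coe (le_trans le_self_add h)
  refine ⟨hfin, ?_⟩
  rw [← hfin.cast_ncard_eq] at h
  have : {t ∈ Ioi 0 | rpowSum c lam t = 0}.ncard + 1 ≤ n := by exact_mod_cast h
  change {t ∈ Ioi 0 | rpowSum c lam t = 0}.ncard ≤ n - 1
  omega
end

section
/- Let P ∈ ℚ[t][y] be a polynomial of degree d = deg_y P ≥ 2 in y, and assume P and ∂P/∂y are coprime as polynomials in y over the field ℚ(t). Then there exist a nonzero polynomial Δ ∈ ℚ[t] and polynomials u_{j,k} ∈ ℚ[t] for 1 ≤ j ≤ d − 1, 0 ≤ k ≤ d − 1, such that for every open set U ⊆ ℂ and every differentiable function y : U → ℂ satisfying P(t, y(t)) = 0 for all t ∈ U, one has Δ(t) · (d/dt)(y(t)^j) = Σ_{k=0}^{d−1} u_{j,k}(t) · y(t)^k for every t ∈ U with Δ(t) ≠ 0 and every j ∈ {1, ..., d − 1}. -/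
/-!
Differentiating `P(t, y(t)) = 0` gives `P_t(t, y) + P_y(t, y) · y' = 0`. Coprimality over `ℚ(t)`
yields, after clearing denominators, a Bezout relation `a P + b P_y = δ(t)` in `ℚ[t][y]`, so along
the curve `δ · y' = -b P_t` and `δ · (y^j)' = -j y^(j-1) b P_t`. Dividing the right-hand side by `P`
over `ℚ(t)` and clearing denominators once more (with one `e(t)` serving all `j < d`) replaces it by
a polynomial of degree `< d` in `y`; then `Δ = e δ`.
-/

/-- Evaluation of a polynomial in `y` with coefficients in `ℚ[t]` at `(τ, ξ) ∈ ℂ × ℂ`. -/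
noncomputable def evalPoly2 (τ ξ : ℂ) (P : Polynomial (Polynomial ℚ)) : ℂ :=
  Polynomial.eval₂ (Polynomial.aeval τ : Polynomial ℚ →ₐ[ℚ] ℂ).toRingHom ξ P

open Polynomial

namespace Polynomial

variable {R : Type*} [CommRing R] [IsDomain R]

theorem exists_map_eq_C_mul {K : Type*} [Field K] [Algebra R K] [IsFractionRing R K]
    (p : K[X]) :
    ∃ e : R, e ≠ 0 ∧ ∃ q : R[X], q.map (algebraMap R K) = C (algebraMap R K e) * p := by
  obtain ⟨b, hb, hbp⟩ := IsLocalization.integerNormalization_spec (nonZeroDivisors R) p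
  exact ⟨b, mem_nonZeroDivisors_iff_ne_zero.1 hb, _,
    by rw [hbp, Algebra.smul_def, algebraMap_apply]⟩

theorem exists_mul_add_mul_eq_C_of_isCoprime_map {K : Type*} [Field K] [Algebra R K]
    [IsFractionRing R K] {P Q : R[X]}
    (h : IsCoprime (P.map (algebraMap R K)) (Q.map (algebraMap R K))) :
    ∃ δ : R, δ ≠ 0 ∧ ∃ a b : R[X], a * P + b * Q = C δ := by
  obtain ⟨A, B, hAB⟩ := h
  obtain ⟨eA, heA, a, ha⟩ := exists_map_eq_C_mul (R := R) A
  obtain ⟨eB, heB, b, hb⟩ := exists_map_eq_C_mul (R := R) B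
  refine ⟨eA * eB, mul_ne_zero heA heB, C eB * a, C eA * b,
    map_injective _ (IsFractionRing.injective R K) ?_⟩
  simp only [Polynomial.map_add, Polynomial.map_mul, map_C, ha, hb, map_mul]
  linear_combination (C (algebraMap R K eA) * C (algebraMap R K eB)) * hAB

theorem exists_C_mul_eq_mul_add_degree_lt {P : R[X]} (hP : P ≠ 0) (F : R[X]) :
    ∃ e : R, e ≠ 0 ∧ ∃ q r : R[X], C e * F = q * P + r ∧ r.degree < P.degree := by
  set φ := algebraMap R (FractionRing R)
  have hφ : Function.Injective φ := IsFractionRing.injective R _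
  have hPφ : P.map φ ≠ 0 := (Polynomial.map_ne_zero_iff hφ).2 hP
  set Pm := P.map φ * C (P.map φ).leadingCoeff⁻¹
  obtain ⟨e₁, he₁, q, hq⟩ :=
    exists_map_eq_C_mul (R := R) (C (P.map φ).leadingCoeff⁻¹ * (F.map φ /ₘ Pm))
  obtain ⟨e₂, he₂, r, hr⟩ := exists_map_eq_C_mul (R := R) (F.map φ %ₘ Pm)
  refine ⟨e₁ * e₂, mul_ne_zero he₁ he₂, C e₂ * q, C e₁ * r, map_injective φ hφ ?_, ?_⟩
  · simp only [Polynomial.map_add, Polynomial.map_mul, map_C, map_mul]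
    linear_combination -C (φ e₁) * C (φ e₂) * modByMonic_add_div (F.map φ) Pm
      - C (φ e₂) * P.map φ * hq - C (φ e₁) * hr
  · calc (C e₁ * r).degree = (F.map φ %ₘ Pm).degree := by
          rw [degree_C_mul he₁, ← degree_map_eq_of_injective hφ, hr,
            degree_C_mul ((map_ne_zero_iff φ hφ).2 he₂)]
      _ < Pm.degree := degree_modByMonic_lt _ (monic_mul_leadingCoeff_inv hPφ)
      _ = P.degree := by rw [degree_mul_leadingCoeff_inv _ hPφ, degree_map_eq_of_injective hφ]

theorem exists_forall_C_mul_eq_mul_add_degree_lt {ι : Type*} {P : R[X]} (hP : P ≠ 0)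
    (s : Finset ι) (F : ι → R[X]) :
    ∃ e : R, e ≠ 0 ∧ ∀ i ∈ s, ∃ q r : R[X], C e * F i = q * P + r ∧ r.degree < P.degree := by
  classical
  have scale : ∀ c e G, (∃ q r : R[X], C e * G = q * P + r ∧ r.degree < P.degree) →
      ∃ q r : R[X], C (c * e) * G = q * P + r ∧ r.degree < P.degree := by
    rintro c e G ⟨q, r, hqr, hr⟩
    refine ⟨C c * q, C c * r, by rw [C_mul, mul_assoc, hqr]; ring, ?_⟩
    rw [← smul_eq_C_mul]
    exact (degree_smul_le c r).trans_lt hr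
  induction s using Finset.induction_on with
  | empty => exact ⟨1, one_ne_zero, by simp⟩
  | insert i s _ ih =>
    obtain ⟨e, he, hs⟩ := ih
    obtain ⟨e', he', hi⟩ := exists_C_mul_eq_mul_add_degree_lt hP (F i)
    refine ⟨e * e', mul_ne_zero he he',
      (Finset.forall_mem_insert _ _ _).2 ⟨scale e _ _ hi, fun j hj => ?_⟩⟩
    simpa only [mul_comm e] using scale e' _ _ (hs j hj)

end Polynomial

/-- `ℚ[t]` with `d/dt`, so that `Differential.mapCoeffs P` is `∂P/∂t` for `P ∈ ℚ[t][y]`. -/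
noncomputable instance : Differential ℚ[X] := ⟨derivative'.restrictScalars ℤ⟩

theorem Differential.deriv_eq_derivative (a : ℚ[X]) : Differential.deriv a = derivative a := rfl

section evalPoly2

variable (τ ξ : ℂ)

@[simp] theorem evalPoly2_add (p q : ℚ[X][X]) :
    evalPoly2 τ ξ (p + q) = evalPoly2 τ ξ p + evalPoly2 τ ξ q := eval₂_add _ _

@[simp] theorem evalPoly2_mul (p q : ℚ[X][X]) :
    evalPoly2 τ ξ (p * q) = evalPoly2 τ ξ p * evalPoly2 τ ξ q := eval₂_mul _ _

@[simp] theorem evalPoly2_neg (p : ℚ[X][X]) : evalPoly2 τ ξ (-p) = -evalPoly2 τ ξ p :=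
  eval₂_neg _

@[simp] theorem evalPoly2_C (a : ℚ[X]) : evalPoly2 τ ξ (C a) = aeval τ a := eval₂_C _ _

@[simp] theorem evalPoly2_X_pow (n : ℕ) : evalPoly2 τ ξ (X ^ n) = ξ ^ n := eval₂_X_pow _ _

@[simp] theorem evalPoly2_natCast (n : ℕ) : evalPoly2 τ ξ n = n := eval₂_natCast _ _ _

theorem evalPoly2_monomial (n : ℕ) (a : ℚ[X]) :
    evalPoly2 τ ξ (monomial n a) = aeval τ a * ξ ^ n :=
  eval₂_monomial _ _

theorem evalPoly2_eq_sum_range_of_degree_lt {p : ℚ[X][X]} {n : ℕ} (hp : p.degree < n) :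
    evalPoly2 τ ξ p = ∑ k ∈ Finset.range n, aeval τ (p.coeff k) * ξ ^ k := by
  rcases eq_or_ne p 0 with rfl | hp0
  · simp [evalPoly2]
  · exact eval₂_eq_sum_range' _ ((natDegree_lt_iff_degree_lt hp0).2 hp) ξ

end evalPoly2

theorem hasDerivAt_evalPoly2 (P : ℚ[X][X]) {y : ℂ → ℂ} {y' t : ℂ} (hy : HasDerivAt y y' t) :
    HasDerivAt (fun s => evalPoly2 s (y s) P)
      (evalPoly2 t (y t) (Differential.mapCoeffs P) + evalPoly2 t (y t) (derivative P) * y')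
      t := by
  induction P using Polynomial.induction_on' with
  | add p q hp hq =>
    simp only [evalPoly2_add, map_add]
    exact (hp.add hq).congr_deriv (by ring)
  | monomial n a =>
    simp only [evalPoly2_monomial, Differential.mapCoeffs_monomial, derivative_monomial]
    refine ((Polynomial.hasDerivAt_aeval a t).mul (hy.fun_pow n)).congr_deriv ?_
    simp only [Differential.deriv_eq_derivative, map_mul, map_natCast]
    ring

theorem evalPoly2_mapCoeffs_add_derivative_mul_deriv_eq_zero (P : ℚ[X][X]) {U : Set ℂ}
    (hU : IsOpen U) {y : ℂ → ℂ} (hy : ∀ t ∈ U, DifferentiableAt ℂ y t)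
    (hP : ∀ t ∈ U, evalPoly2 t (y t) P = 0) {t : ℂ} (ht : t ∈ U) :
    evalPoly2 t (y t) (Differential.mapCoeffs P) + evalPoly2 t (y t) (derivative P) * deriv y t
      = 0 :=
  (hasDerivAt_evalPoly2 P (hy t ht).hasDerivAt).unique
    ((hasDerivAt_const t 0).congr_of_eventuallyEq (Filter.eventuallyEq_of_mem (hU.mem_nhds ht) hP))

theorem aeval_mul_deriv_eq_evalPoly2 {P a b : ℚ[X][X]} {δ : ℚ[X]}
    (hab : a * P + b * derivative P = C δ) {U : Set ℂ}
    (hU : IsOpen U) {y : ℂ → ℂ} (hy : ∀ t ∈ U, DifferentiableAt ℂ y t)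
    (hP : ∀ t ∈ U, evalPoly2 t (y t) P = 0) {t : ℂ} (ht : t ∈ U) :
    aeval t δ * deriv y t = evalPoly2 t (y t) (-(b * Differential.mapCoeffs P)) := by
  have hchain := evalPoly2_mapCoeffs_add_derivative_mul_deriv_eq_zero P hU hy hP ht
  have hbez := congrArg (evalPoly2 t (y t)) hab
  simp only [evalPoly2_add, evalPoly2_mul, evalPoly2_C, hP t ht, mul_zero, zero_add] at hbez
  rw [evalPoly2_neg, evalPoly2_mul]
  linear_combination (-deriv y t) * hbez + evalPoly2 t (y t) b * hchain

theorem stmt12_general (P : Polynomial (Polynomial ℚ)) (d : ℕ) (hd : d = P.natDegree)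
    (hcop : IsCoprime
      (P.map (algebraMap (Polynomial ℚ) (FractionRing (Polynomial ℚ))))
      ((Polynomial.derivative P).map
        (algebraMap (Polynomial ℚ) (FractionRing (Polynomial ℚ))))) :
    ∃ Δ : Polynomial ℚ, Δ ≠ 0 ∧
    ∃ u : ℕ → ℕ → Polynomial ℚ,
      ∀ (U : Set ℂ), IsOpen U → ∀ y : ℂ → ℂ,
        (∀ t ∈ U, DifferentiableAt ℂ y t) →
        (∀ t ∈ U, evalPoly2 t (y t) P = 0) →
        ∀ t ∈ U, (Polynomial.aeval t Δ : ℂ) ≠ 0 →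
          ∀ j : ℕ, 1 ≤ j → j ≤ d - 1 →
            (Polynomial.aeval t Δ : ℂ) * deriv (fun s => y s ^ j) t
              = ∑ k ∈ Finset.range d, (Polynomial.aeval t (u j k) : ℂ) * y t ^ k := by
  have hP0 : P ≠ 0 := by rintro rfl; simp [not_isCoprime_zero_zero] at hcop
  obtain ⟨δ, hδ, a, b, hab⟩ := exists_mul_add_mul_eq_C_of_isCoprime_map hcop
  obtain ⟨e, he, hdiv⟩ := exists_forall_C_mul_eq_mul_add_degree_lt hP0 (Finset.range d)
    fun j => -((j : ℚ[X][X]) * X ^ (j - 1) * (b * Differential.mapCoeffs P))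
  choose! q r hqr hr using hdiv
  refine ⟨e * δ, mul_ne_zero he hδ, fun j k => (r j).coeff k, ?_⟩
  intro U hU y hy hP t ht _ j hj hjd
  have hj_mem : j ∈ Finset.range d := Finset.mem_range.2 (by omega)
  have hrd : (r j).degree < d := by rw [hd, ← degree_eq_natDegree hP0]; exact hr j hj_mem
  calc aeval t (e * δ) * deriv (fun s => y s ^ j) t
      = aeval t e * (j * y t ^ (j - 1) * (aeval t δ * deriv y t)) := by
        rw [deriv_fun_pow (hy t ht), map_mul]; ring
    _ = evalPoly2 t (y t)
          (C e * -((j : ℚ[X][X]) * X ^ (j - 1) * (b * Differential.mapCoeffs P))) := by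
        rw [aeval_mul_deriv_eq_evalPoly2 hab hU hy hP ht]; simp
    _ = evalPoly2 t (y t) (r j) := by simp [hqr j hj_mem, hP t ht]
    _ = _ := evalPoly2_eq_sum_range_of_degree_lt _ _ hrd

/-- if `P ∈ ℚ[t][y]` has `d = deg_y P ≥ 2` and `P`, `∂P/∂y` are coprime
over `ℚ(t)`, then there are `0 ≠ Δ ∈ ℚ[t]` and `u_{j,k} ∈ ℚ[t]` such that any
differentiable solution `y(t)` of `P(t, y(t)) = 0` on an open set satisfies
`Δ(t)·(y(t)^j)' = Σ_{k<d} u_{j,k}(t)·y(t)^k` (for `1 ≤ j ≤ d - 1`) wherever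
`Δ(t) ≠ 0`. -/
theorem stmt12 (P : Polynomial (Polynomial ℚ)) (d : ℕ) (hd : d = P.natDegree)
    (hd2 : 2 ≤ d)
    (hcop : IsCoprime
      (P.map (algebraMap (Polynomial ℚ) (FractionRing (Polynomial ℚ))))
      ((Polynomial.derivative P).map
        (algebraMap (Polynomial ℚ) (FractionRing (Polynomial ℚ))))) :
    ∃ Δ : Polynomial ℚ, Δ ≠ 0 ∧
    ∃ u : ℕ → ℕ → Polynomial ℚ,
      ∀ (U : Set ℂ), IsOpen U → ∀ y : ℂ → ℂ,
        (∀ t ∈ U, DifferentiableAt ℂ y t) →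
        (∀ t ∈ U, evalPoly2 t (y t) P = 0) →
        ∀ t ∈ U, (Polynomial.aeval t Δ : ℂ) ≠ 0 →
          ∀ j : ℕ, 1 ≤ j → j ≤ d - 1 →
            (Polynomial.aeval t Δ : ℂ) * deriv (fun s => y s ^ j) t
              = ∑ k ∈ Finset.range d, (Polynomial.aeval t (u j k) : ℂ) * y t ^ k :=
  stmt12_general P d hd hcop
end
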